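/- arXiv:2408.07112 — 2 statements merged into one kernel-verified Lean document; each statement's English description precedes it below -/
import Mathlib

section
/- Let n ≥ 3, and for i ∈ {1, ..., n+1} let v^(i) ∈ ℝ^(n+1) be the vector with i-th coordinate n/(n+1) and all other coordinates -1/(n+1). Let i ≠ j and let u, u' ∈ H_n be arbitrary. Then there exist lattice points P, Q ∈ A_n and real numbers s, t such that ‖(u + P + s·v^(i)) - (u' + Q + t·v^(j))‖ ≤ sqrt(n(n-2)/(12(n-1))); that is, the minimal distance between the family of lines L_i = u + A_n + ℝ·v^(i) and the family L_j = u' + A_n + ℝ·v^(j) is at most sqrt(n(n-2)/(12(n-1))). -/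
/-!
Put `a = u - u' + P`. Sliding along the two lines kills the coordinates `i` and `j` of `a`, and
the squared distance left is the sum of the squared deviations of the other `N = n - 1`
coordinates of `a` from their mean. So it suffices that every `y ∈ ℝ^N` has an integer translate
whose squared deviations from the mean sum to at most `(N² - 1) / (12 N)`; with `N = n - 1` this
is `n (n - 2) / (12 (n - 1))`.

For this, view the fractional parts `f 0 ≤ ⋯ ≤ f (N - 1)` of `y` as points of the circle `ℝ/ℤ`
and cut the circle in one of its `N` gaps, lowering the points after the cut by one. Weighting
the `N` cuts by the gap lengths, the average of `∑_{k<l} (x l - x k)²` is `∑_{k<l} d (1 - d)`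
with `d = f l - f k`, and completing the square around the equally spaced configuration bounds
this by `(N² - 1) / 12`.
-/

/-- The hyperplane `H_n = {x ∈ ℝ^(n+1) : ∑ x_i = 0}`. -/
def hyperplaneH (n : ℕ) : Set (EuclideanSpace ℝ (Fin (n + 1))) :=
  {x | ∑ i, x i = 0}

/-- The lattice `A_n = ℤ^(n+1) ∩ H_n`. -/
def Alat (n : ℕ) : Set (EuclideanSpace ℝ (Fin (n + 1))) :=
  {x | (∀ k, ∃ m : ℤ, x k = (m : ℝ)) ∧ ∑ i, x i = 0}

/-- `v n i` is the vector with `i`-th coordinate `n/(n+1)` and remaining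
coordinates `-1/(n+1)` (a shortest non-zero vector of `A*_n`). -/
noncomputable def v (n : ℕ) (i : Fin (n + 1)) : EuclideanSpace ℝ (Fin (n + 1)) :=
  WithLp.toLp 2 (fun j => if j = i then (n : ℝ) / ((n : ℝ) + 1) else -1 / ((n : ℝ) + 1))

open Finset

theorem sum_range_sum_range_sub_sq (x : ℕ → ℝ) (N : ℕ) :
    ∑ l ∈ range N, ∑ k ∈ range l, (x l - x k) ^ 2 =
      N * ∑ m ∈ range N, x m ^ 2 - (∑ m ∈ range N, x m) ^ 2 := by
  induction N with
  | zero => simp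
  | succ N ih =>
    have last : ∑ k ∈ range N, (x N - x k) ^ 2 =
        N * x N ^ 2 - 2 * x N * ∑ k ∈ range N, x k + ∑ k ∈ range N, x k ^ 2 := by
      simp only [sub_sq, sum_add_distrib, sum_sub_distrib, ← mul_sum, sum_const, card_range,
        nsmul_eq_mul]
    rw [sum_range_succ, ih, last, sum_range_succ, sum_range_succ]
    push_cast
    ring

theorem sum_range_sum_range_sub (x : ℕ → ℝ) (N : ℕ) :
    ∑ l ∈ range N, ∑ k ∈ range l, (x l - x k) = ∑ m ∈ range N, (2 * m + 1 - N) * x m := by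
  induction N with
  | zero => simp
  | succ N ih =>
    have shift : ∀ m : ℕ,
        (2 * m + 1 - ((N + 1 : ℕ) : ℝ)) * x m = (2 * m + 1 - N) * x m - x m := by
      intro m; push_cast; ring
    rw [sum_range_succ, ih, sum_sub_distrib, sum_const, card_range, nsmul_eq_mul, sum_range_succ,
      sum_congr rfl fun m _ => shift m, sum_sub_distrib]
    push_cast
    ring

theorem sum_range_two_mul_add_one_sub (N : ℕ) : ∑ m ∈ range N, (2 * m + 1 - N : ℝ) = 0 := by
  simpa using (sum_range_sum_range_sub (fun _ => 1) N).symm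

theorem sum_range_two_mul_add_one_sub_sq (N : ℕ) :
    ∑ m ∈ range N, (2 * m + 1 - N : ℝ) ^ 2 = N * (N ^ 2 - 1) / 3 := by
  induction N with
  | zero => simp
  | succ N ih =>
    have shift : ∀ m : ℕ, (2 * m + 1 - ((N + 1 : ℕ) : ℝ)) ^ 2 =
        (2 * m + 1 - N) ^ 2 - 2 * (2 * m + 1 - N) + 1 := by
      intro m; push_cast; ring
    rw [sum_range_succ, sum_congr rfl fun m _ => shift m, sum_add_distrib, sum_sub_distrib,
      ← mul_sum, ih, sum_range_two_mul_add_one_sub, sum_const, card_range, nsmul_eq_mul]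
    push_cast
    ring

/-- Equality holds exactly when `f m = m / N + const`. -/
theorem sum_range_sum_range_sub_sub_sq_le (f : ℕ → ℝ) {N : ℕ} (hN : 0 < N) :
    ∑ l ∈ range N, ∑ k ∈ range l, ((f l - f k) - (f l - f k) ^ 2) ≤ ((N : ℝ) ^ 2 - 1) / 12 := by
  have hN' : (0 : ℝ) < N := by exact_mod_cast hN
  set h : ℕ → ℝ := fun m => f m - (∑ m ∈ range N, f m) / N
  have hsum : ∑ m ∈ range N, h m = 0 := by
    simp only [h, sum_sub_distrib, sum_const, card_range, nsmul_eq_mul]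
    field_simp
    ring
  have hdiff : ∀ k l, f l - f k = h l - h k := fun k l => by simp only [h]; ring
  calc ∑ l ∈ range N, ∑ k ∈ range l, ((f l - f k) - (f l - f k) ^ 2)
      = ∑ l ∈ range N, ∑ k ∈ range l, (h l - h k) -
          ∑ l ∈ range N, ∑ k ∈ range l, (h l - h k) ^ 2 := by
        simp only [hdiff, ← sum_sub_distrib]
    _ = ∑ m ∈ range N, ((2 * m + 1 - N) * h m - N * h m ^ 2) := by
        rw [sum_range_sum_range_sub, sum_range_sum_range_sub_sq, hsum, mul_sum, sum_sub_distrib]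
        ring
    _ ≤ ∑ m ∈ range N, (2 * m + 1 - N : ℝ) ^ 2 / (4 * N) := by
        refine sum_le_sum fun m _ => ?_
        rw [le_div_iff₀ (by positivity)]
        nlinarith [sq_nonneg (2 * N * h m - (2 * m + 1 - N))]
    _ = ((N : ℝ) ^ 2 - 1) / 12 := by
        rw [← sum_div, sum_range_two_mul_add_one_sub_sq]
        field_simp
        ring

theorem Finset.exists_le_of_sum_mul_le {ι : Type*} {s : Finset ι} {w C : ι → ℝ} {B : ℝ}
    (hw₀ : ∀ i ∈ s, 0 ≤ w i) (hw₁ : ∑ i ∈ s, w i = 1) (h : ∑ i ∈ s, w i * C i ≤ B) :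
    ∃ i ∈ s, C i ≤ B := by
  have hne : s.Nonempty := nonempty_of_sum_ne_zero (by rw [hw₁]; exact one_ne_zero)
  obtain ⟨i, hi, hmin⟩ := s.exists_mem_eq_inf' hne C
  refine ⟨i, hi, ?_⟩
  have hcenter := inf_le_centerMass hw₀ (hw₁ ▸ one_pos) (f := C)
  simp only [centerMass, hw₁, inv_one, one_mul, smul_eq_mul] at hcenter
  rw [← hmin]
  exact hcenter.trans h

/-- `circleGap M f j` is the gap after the `j`-th of the points `f 0 ≤ ⋯ ≤ f M` of the circle `ℝ/ℤ`,
the last gap wrapping around from `f M` to `f 0 + 1`. -/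
def circleGap (M : ℕ) (f : ℕ → ℝ) (j : ℕ) : ℝ :=
  if j < M then f (j + 1) - f j else 1 - (f M - f 0)

def lowerAfter (f : ℕ → ℝ) (j m : ℕ) : ℝ :=
  f m - if j < m then 1 else 0

section circleGap

variable {M : ℕ} {f : ℕ → ℝ}

theorem sum_Ico_circleGap {k l : ℕ} (hkl : k ≤ l) (hl : l ≤ M) :
    ∑ j ∈ Ico k l, circleGap M f j = f l - f k := by
  rw [← sum_Ico_sub f hkl]
  refine sum_congr rfl fun j hj => ?_
  rw [circleGap, if_pos (by grind)]

theorem sum_circleGap : ∑ j ∈ range (M + 1), circleGap M f j = 1 := by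
  rw [sum_range_succ, range_eq_Ico, sum_Ico_circleGap (Nat.zero_le M) le_rfl, circleGap,
    if_neg (lt_irrefl M)]
  ring

theorem circleGap_nonneg (hf : MonotoneOn f (Set.Iic M)) (hspan : f M ≤ f 0 + 1) {j : ℕ}
    (hj : j ≤ M) : 0 ≤ circleGap M f j := by
  unfold circleGap
  split_ifs with hjM
  · exact sub_nonneg.2 (hf (Set.mem_Iic.2 hj) (Set.mem_Iic.2 hjM) j.le_succ)
  · linarith

theorem lowerAfter_sub_lowerAfter (j : ℕ) {k l : ℕ} (hkl : k ≤ l) :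
    lowerAfter f j l - lowerAfter f j k = (f l - f k) - if j ∈ Ico k l then 1 else 0 := by
  unfold lowerAfter
  split_ifs <;> simp only [mem_Ico] at * <;> first | (exfalso; omega) | ring

theorem sum_circleGap_mul_lowerAfter_sub_sq {k l : ℕ} (hkl : k ≤ l) (hl : l ≤ M) :
    ∑ j ∈ range (M + 1), circleGap M f j * (lowerAfter f j l - lowerAfter f j k) ^ 2 =
      (f l - f k) - (f l - f k) ^ 2 := by
  have expand : ∀ j, circleGap M f j * (lowerAfter f j l - lowerAfter f j k) ^ 2 =
      (f l - f k) ^ 2 * circleGap M f j +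
        (1 - 2 * (f l - f k)) * if j ∈ Ico k l then circleGap M f j else 0 := by
    intro j
    rw [lowerAfter_sub_lowerAfter j hkl]
    split_ifs <;> ring
  have hsub : range (M + 1) ∩ Ico k l = Ico k l := inter_eq_right.2 fun j hj => by grind
  rw [sum_congr rfl fun j _ => expand j, sum_add_distrib, ← mul_sum, ← mul_sum, sum_circleGap,
    sum_ite_mem, hsub, sum_Ico_circleGap hkl hl]
  ring

theorem sum_circleGap_mul_sum_lowerAfter_sub_sq :
    ∑ j ∈ range (M + 1), circleGap M f j *
        ∑ l ∈ range (M + 1), ∑ k ∈ range l, (lowerAfter f j l - lowerAfter f j k) ^ 2 =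
      ∑ l ∈ range (M + 1), ∑ k ∈ range l, ((f l - f k) - (f l - f k) ^ 2) := by
  simp only [mul_sum]
  rw [sum_comm]
  refine sum_congr rfl fun l hl => ?_
  rw [sum_comm]
  exact sum_congr rfl fun k hk => sum_circleGap_mul_lowerAfter_sub_sq (mem_range.1 hk).le
    (Nat.lt_succ_iff.1 (mem_range.1 hl))

end circleGap

theorem exists_sum_range_lowerAfter_sub_sq_le {M : ℕ} {f : ℕ → ℝ}
    (hf : MonotoneOn f (Set.Iic M)) (hspan : f M ≤ f 0 + 1) :
    ∃ j ∈ range (M + 1), ∑ l ∈ range (M + 1), ∑ k ∈ range l,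
      (lowerAfter f j l - lowerAfter f j k) ^ 2 ≤ (((M + 1 : ℕ) : ℝ) ^ 2 - 1) / 12 :=
  exists_le_of_sum_mul_le
    (fun _ hj => circleGap_nonneg hf hspan (Nat.lt_succ_iff.1 (mem_range.1 hj))) sum_circleGap
    (sum_circleGap_mul_sum_lowerAfter_sub_sq.trans_le
      (sum_range_sum_range_sub_sub_sq_le f M.succ_pos))

theorem exists_equiv_fin_monotone_comp {ι α : Type*} [Fintype ι] [LinearOrder α] {N : ℕ}
    (hN : Fintype.card ι = N) (g : ι → α) : ∃ τ : Fin N ≃ ι, Monotone (g ∘ τ) := by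
  let e := (Fintype.equivFinOfCardEq hN).symm
  exact ⟨(Tuple.sort (g ∘ e)).trans e, Tuple.monotone_sort (g ∘ e)⟩

open Fin.NatCast in
theorem exists_int_card_mul_sum_sq_sub_sq_sum_le {ι : Type*} [Fintype ι] [Nonempty ι]
    (y : ι → ℝ) : ∃ c : ι → ℤ, Fintype.card ι * ∑ a, (y a + c a) ^ 2 - (∑ a, (y a + c a)) ^ 2 ≤
      ((Fintype.card ι : ℝ) ^ 2 - 1) / 12 := by
  obtain ⟨M, hM⟩ := Nat.exists_eq_add_one_of_ne_zero (Fintype.card_ne_zero (α := ι))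
  obtain ⟨τ, hτ⟩ := exists_equiv_fin_monotone_comp hM fun a => Int.fract (y a)
  set f : ℕ → ℝ := fun m => Int.fract (y (τ (m : Fin (M + 1))))
  have hf : MonotoneOn f (Set.Iic M) := fun k hk l hl hkl => hτ <| by
    rwa [Fin.le_def, Fin.val_cast_of_lt (Nat.lt_succ_of_le hk),
      Fin.val_cast_of_lt (Nat.lt_succ_of_le hl)]
  have hspan : f M ≤ f 0 + 1 :=
    (Int.fract_lt_one _).le.trans (le_add_of_nonneg_left (Int.fract_nonneg _))
  obtain ⟨j, -, hj⟩ := exists_sum_range_lowerAfter_sub_sq_le hf hspan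
  refine ⟨fun a => -⌊y a⌋ - if j < (τ.symm a : ℕ) then 1 else 0, ?_⟩
  have hx : ∀ a, y a + ((-⌊y a⌋ - if j < (τ.symm a : ℕ) then 1 else 0 : ℤ) : ℝ) =
      lowerAfter f j (τ.symm a) := by
    intro a
    simp only [lowerAfter, f, Fin.cast_val_eq_self, Equiv.apply_symm_apply, ← Int.self_sub_floor]
    push_cast
    ring
  have hsum : ∀ G : ℝ → ℝ, ∑ a, G (lowerAfter f j (τ.symm a)) =
      ∑ m ∈ range (M + 1), G (lowerAfter f j m) := fun G => by
    rw [← Fin.sum_univ_eq_sum_range]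
    exact Fintype.sum_equiv τ.symm _ _ fun _ => rfl
  rw [sum_range_sum_range_sub_sq] at hj
  simp only [hx]
  rw [hsum (· ^ 2), hsum fun x => x, hM]
  exact hj

theorem sum_sq_sub_mean {α : Type*} (s : Finset α) (x : α → ℝ) (hs : s.Nonempty) :
    ∑ k ∈ s, (x k - (∑ l ∈ s, x l) / #s) ^ 2 =
      (#s * ∑ k ∈ s, x k ^ 2 - (∑ k ∈ s, x k) ^ 2) / #s := by
  have hcard : (#s : ℝ) ≠ 0 := by exact_mod_cast hs.card_pos.ne'
  simp only [sub_sq, sum_add_distrib, sum_sub_distrib, ← sum_mul, ← mul_sum, sum_const,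
    nsmul_eq_mul]
  field_simp
  ring

theorem Finset.exists_int_sum_sq_sub_mean_le {α : Type*} (s : Finset α) (hs : s.Nonempty)
    (y : α → ℝ) : ∃ c : α → ℤ, ∑ k ∈ s, (y k + c k - (∑ l ∈ s, (y l + c l)) / #s) ^ 2 ≤
      ((#s : ℝ) ^ 2 - 1) / (12 * #s) := by
  classical
  have : Nonempty s := hs.coe_sort
  obtain ⟨c, hc⟩ := exists_int_card_mul_sum_sq_sub_sq_sum_le fun k : s => y k
  refine ⟨fun a => if h : a ∈ s then c ⟨a, h⟩ else 0, ?_⟩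
  have hsum : ∀ G : ℝ → ℝ, ∑ a ∈ s, G (y a + ((if h : a ∈ s then c ⟨a, h⟩ else 0 : ℤ) : ℝ)) =
      ∑ k : s, G (y k + c k) := fun G => by
    rw [← sum_coe_sort]
    exact sum_congr rfl fun k _ => by rw [dif_pos k.2]
  rw [sum_sq_sub_mean _ _ hs, hsum (· ^ 2), hsum fun x => x, ← Fintype.card_coe s, ← div_div]
  exact div_le_div_of_nonneg_right hc (Nat.cast_nonneg _)

theorem zero_mem_Alat (n : ℕ) : 0 ∈ Alat n :=
  ⟨fun _ => ⟨0, by simp⟩, by simp⟩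

theorem exists_mem_Alat_eqOn {n : ℕ} {S : Finset (Fin (n + 1))} {i : Fin (n + 1)} (hi : i ∉ S)
    (c : Fin (n + 1) → ℤ) : ∃ P ∈ Alat n, ∀ k ∈ S, P k = c k := by
  classical
  refine ⟨WithLp.toLp 2 fun k => (((if k ∈ S then c k else 0) -
      if k = i then ∑ l ∈ S, c l else 0 : ℤ) : ℝ), ⟨fun k => ⟨_, rfl⟩, ?_⟩, fun k hk => ?_⟩
  · simp [sum_sub_distrib, sum_ite_mem]
  · simp [hk, ne_of_mem_of_not_mem hk hi]

theorem card_compl_pair {n : ℕ} {i j : Fin (n + 1)} (hij : i ≠ j) :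
    (#({i, j}ᶜ : Finset (Fin (n + 1))) : ℝ) = n - 1 := by
  have h2 := card_le_univ ({i, j} : Finset (Fin (n + 1)))
  rw [card_pair hij, Fintype.card_fin] at h2
  rw [card_compl, card_pair hij, Fintype.card_fin, Nat.cast_sub h2]
  push_cast
  ring

theorem v_apply_self (n : ℕ) (i : Fin (n + 1)) : v n i i = n / (n + 1) := by
  simp [v]

theorem v_apply_of_ne {n : ℕ} {i k : Fin (n + 1)} (h : k ≠ i) : v n i k = -1 / (n + 1) := by
  simp [v, h]

theorem exists_norm_add_smul_v_sub_smul_v_sq_eq {n : ℕ} (hn : 2 ≤ n) {i j : Fin (n + 1)}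
    (hij : i ≠ j) {a : EuclideanSpace ℝ (Fin (n + 1))} (ha : a ∈ hyperplaneH n) :
    ∃ s t : ℝ, ‖a + s • v n i - t • v n j‖ ^ 2 =
      ∑ k ∈ {i, j}ᶜ, (a k - (∑ l ∈ {i, j}ᶜ, a l) / #{i, j}ᶜ) ^ 2 := by
  set S : Finset (Fin (n + 1)) := {i, j}ᶜ
  set β := (∑ l ∈ S, a l) / #S
  have hn' : (2 : ℝ) ≤ n := by exact_mod_cast hn
  have hβ : a i + a j + (n - 1) * β = 0 := by
    have hsplit := sum_add_sum_compl {i, j} a.ofLp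
    have hSβ : (n - 1) * β = ∑ l ∈ S, a l := by
      rw [← card_compl_pair hij]
      exact mul_div_cancel₀ _ (by rw [card_compl_pair hij]; linarith)
    rw [sum_pair hij, ha.out] at hsplit
    linarith
  -- `s - t = (n + 1) β` shifts every coordinate by `-β`, `s` then clears coordinate `i`,
  -- and `hβ` clears coordinate `j`.
  refine ⟨β - a i, -a i - n * β, ?_⟩
  set z := a + (β - a i) • v n i - (-a i - n * β) • v n j
  have hz : ∀ k ∈ S, z k = a k - β := by
    intro k hk
    simp only [S, mem_compl, mem_insert, mem_singleton, not_or] at hk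
    simp only [z, PiLp.sub_apply, PiLp.add_apply, PiLp.smul_apply, smul_eq_mul,
      v_apply_of_ne hk.1, v_apply_of_ne hk.2]
    field_simp
    ring
  have hzi : z i = 0 := by
    simp only [z, PiLp.sub_apply, PiLp.add_apply, PiLp.smul_apply, smul_eq_mul, v_apply_self,
      v_apply_of_ne hij]
    field_simp
    ring
  have hzj : z j = 0 := by
    simp only [z, PiLp.sub_apply, PiLp.add_apply, PiLp.smul_apply, smul_eq_mul, v_apply_self,
      v_apply_of_ne hij.symm]
    field_simp
    linear_combination (n + 1) * hβ
  rw [EuclideanSpace.norm_sq_eq, ← sum_add_sum_compl {i, j}, sum_pair hij, hzi, hzj]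
  simp only [norm_zero, Real.norm_eq_abs, sq_abs]
  rw [sum_congr rfl fun k hk => by rw [hz k hk]]
  ring

/-- For `n ≥ 3`, distinct directions `i ≠ j`, and arbitrary shifts `u, u' ∈ H_n`,
some line of the family `L_i = u + A_n + ℝ·v⁽ⁱ⁾` comes within distance
`√(n(n-2)/(12(n-1)))` of some line of the family `L_j = u' + A_n + ℝ·v⁽ʲ⁾`. -/
theorem min_dist_between_line_families_le (n : ℕ) (hn : 3 ≤ n)
    (i j : Fin (n + 1)) (hij : i ≠ j)
    (u u' : EuclideanSpace ℝ (Fin (n + 1)))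
    (hu : u ∈ hyperplaneH n) (hu' : u' ∈ hyperplaneH n) :
    ∃ P ∈ Alat n, ∃ Q ∈ Alat n, ∃ s t : ℝ,
      ‖(u + P + s • v n i) - (u' + Q + t • v n j)‖ ≤
        Real.sqrt ((n : ℝ) * ((n : ℝ) - 2) / (12 * ((n : ℝ) - 1))) := by
  classical
  set S : Finset (Fin (n + 1)) := {i, j}ᶜ
  have hS : (#S : ℝ) = n - 1 := card_compl_pair hij
  have hn' : (3 : ℝ) ≤ n := by exact_mod_cast hn
  have hSne : S.Nonempty := card_pos.1 <| (Nat.cast_pos (α := ℝ)).1 <| by rw [hS]; linarith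
  obtain ⟨c, hc⟩ := S.exists_int_sum_sq_sub_mean_le hSne fun k => u k - u' k
  obtain ⟨P, hP, hPc⟩ := exists_mem_Alat_eqOn (S := S) (i := i) (by simp [S]) c
  have ha : u - u' + P ∈ hyperplaneH n := by
    show ∑ k, (u - u' + P) k = 0
    simp only [PiLp.add_apply, PiLp.sub_apply, sum_add_distrib,
      sum_sub_distrib, hu.out, hu'.out, hP.2]
    ring
  obtain ⟨s, t, hst⟩ := exists_norm_add_smul_v_sub_smul_v_sq_eq (by omega) hij ha
  refine ⟨P, hP, 0, zero_mem_Alat n, s, t, Real.le_sqrt_of_sq_le ?_⟩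
  have hcoord : ∀ k ∈ S, (u - u' + P) k = u k - u' k + c k := fun k hk => by
    simp [hPc k hk]
  rw [show u + P + s • v n i - (u' + 0 + t • v n j) = u - u' + P + s • v n i - t • v n j by abel,
    hst, sum_congr rfl hcoord, sum_congr rfl fun k hk => by rw [hcoord k hk]]
  refine hc.trans_eq ?_
  rw [hS]
  ring
end

section
/- For n ≥ 2, every nonzero vector x of the permutohedral lattice A*_n satisfies ‖x‖² ≥ n/(n+1), with equality if and only if x = v^(i) or x = -v^(i) for some i ∈ {1, ..., n+1}, where v^(i) is the vector with i-th coordinate n/(n+1) and all other coordinates -1/(n+1). In other words, the vectors ±v^(1), ..., ±v^(n+1) are exactly the shortest non-zero vectors of A*_n. -/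
/-- The permutohedral lattice `A*_n`: all points of the hyperplane
`∑ x_i = 0` in `ℝ^(n+1)` with integer coordinate differences. -/
def Astar (n : ℕ) : Set (EuclideanSpace ℝ (Fin (n + 1))) :=
  {x | (∑ i, x i = 0) ∧ ∀ i j, ∃ k : ℤ, x i - x j = (k : ℝ)}

/-!
Write `N = n + 1`. As `∑ x_j = 0`, `N x_i = ∑_j (x_i - x_j)` is an integer, so all coordinates lie
in one coset `t + ℤ` with `t = r / N`, `r ∈ {0, …, n}`. If `r = 0`, then `x` is a nonzero integer
vector of zero sum and `‖x‖² ≥ 2`. Otherwise every `x_i = t + m_i` with `m_i (m_i + 1) ≥ 0`;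
summing, and using `∑ x_i = 0`, gives `‖x‖² ≥ N t (1 - t) = r (N - r) / N ≥ n / N`. Equality
forces `r ∈ {1, n}` and `x_i ∈ {t, t - 1}` for all `i`, and then the zero sum leaves exactly one
coordinate with the exceptional value, i.e. `x = ±v⁽ⁱ⁾`.
-/

open Finset

theorem exists_int_sub_fract_eq {ι : Type*} {x : ι → ℝ} (hdiff : ∀ i j, ∃ k : ℤ, x i - x j = k)
    (i j : ι) : ∃ m : ℤ, x i - Int.fract (x j) = m := by
  obtain ⟨k, hk⟩ := hdiff i j
  exact ⟨k + ⌊x j⌋, by rw [Int.fract, Int.cast_add, ← hk]; ring⟩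

theorem mul_add_one_nonneg_of_eq_int {y : ℝ} (hy : ∃ m : ℤ, y = m) : 0 ≤ y * (y + 1) := by
  obtain ⟨m, rfl⟩ := hy
  have : 0 ≤ m * (m + 1) := by rcases le_or_gt 0 m with h | h <;> nlinarith
  exact_mod_cast this

theorem one_le_sq_of_eq_int {y : ℝ} (hy : ∃ m : ℤ, y = m) (hy0 : y ≠ 0) : 1 ≤ y ^ 2 := by
  obtain ⟨m, rfl⟩ := hy
  have : 1 ≤ |m| := Int.one_le_abs (by exact_mod_cast hy0)
  rw [← sq_abs, ← Int.cast_abs]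
  exact_mod_cast one_le_pow₀ this

section CosetBound

variable {ι : Type*} [Fintype ι] {x : ι → ℝ}

theorem exists_int_card_mul_eq (hsum : ∑ i, x i = 0) (hdiff : ∀ i j, ∃ k : ℤ, x i - x j = k)
    (i : ι) : ∃ m : ℤ, Fintype.card ι * x i = m := by
  choose k hk using hdiff i
  refine ⟨∑ j, k j, ?_⟩
  push_cast
  simp only [← hk, sum_sub_distrib, hsum, sum_const, card_univ, nsmul_eq_mul, sub_zero]

theorem exists_int_card_mul_fract_eq (hsum : ∑ i, x i = 0)
    (hdiff : ∀ i j, ∃ k : ℤ, x i - x j = k) (i : ι) :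
    ∃ r : ℤ, Fintype.card ι * Int.fract (x i) = r := by
  obtain ⟨m, hm⟩ := exists_int_card_mul_eq hsum hdiff i
  exact ⟨m - Fintype.card ι * ⌊x i⌋, by push_cast; rw [Int.fract, mul_sub, hm]⟩

theorem sum_sub_mul_sub_add_one (hsum : ∑ i, x i = 0) (t : ℝ) :
    ∑ i, (x i - t) * (x i - t + 1) = ∑ i, x i ^ 2 - Fintype.card ι * (t * (1 - t)) := by
  have hexpand : ∀ i, (x i - t) * (x i - t + 1) = x i ^ 2 + (1 - 2 * t) * x i - t * (1 - t) :=
    fun i => by ring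
  simp only [hexpand, sum_sub_distrib, sum_add_distrib, ← mul_sum, hsum, sum_const, card_univ,
    nsmul_eq_mul]
  ring

variable {t : ℝ}

theorem card_mul_le_sum_sq (hsum : ∑ i, x i = 0) (hcoset : ∀ i, ∃ m : ℤ, x i - t = m) :
    Fintype.card ι * (t * (1 - t)) ≤ ∑ i, x i ^ 2 := by
  linarith [sum_nonneg (s := univ) fun i _ => mul_add_one_nonneg_of_eq_int (hcoset i),
    sum_sub_mul_sub_add_one hsum t]

theorem eq_or_eq_sub_one_of_sum_sq_eq (hsum : ∑ i, x i = 0)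
    (hcoset : ∀ i, ∃ m : ℤ, x i - t = m)
    (heq : ∑ i, x i ^ 2 = Fintype.card ι * (t * (1 - t))) (i : ι) : x i = t ∨ x i = t - 1 := by
  have hzero := (sum_eq_zero_iff_of_nonneg fun i _ => mul_add_one_nonneg_of_eq_int (hcoset i)).1
    (by rw [sum_sub_mul_sub_add_one hsum t, heq, sub_self]) i (mem_univ i)
  rcases mul_eq_zero.1 hzero with h | h
  · exact Or.inl (by linarith)
  · exact Or.inr (by linarith)

end CosetBound

section IntegerVectors

variable {ι : Type*} [Fintype ι] {x : ι → ℝ}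

-- A nonzero integer vector with zero sum has at least two nonzero coordinates.
theorem two_le_sum_sq_of_eq_int (hsum : ∑ i, x i = 0) (hint : ∀ i, ∃ m : ℤ, x i = m)
    (hx0 : x ≠ 0) : 2 ≤ ∑ i, x i ^ 2 := by
  obtain ⟨i, hi⟩ : ∃ i, x i ≠ 0 := Function.ne_iff.1 hx0
  obtain ⟨j, hji, hj⟩ : ∃ j, j ≠ i ∧ x j ≠ 0 := by
    by_contra! h
    exact hi (by rw [← hsum, sum_eq_single i (fun j _ hj => h j hj) (by simp)])
  calc (2 : ℝ) ≤ x i ^ 2 + x j ^ 2 := by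
        linarith [one_le_sq_of_eq_int (hint i) hi, one_le_sq_of_eq_int (hint j) hj]
    _ ≤ ∑ k, x k ^ 2 := add_le_sum (fun k _ => sq_nonneg (x k)) (mem_univ i) (mem_univ j) hji.symm

end IntegerVectors

section TwoValued

variable {ι : Type*} [Fintype ι]

theorem sum_eq_of_forall_eq_or_eq {x : ι → ℝ} {p q : ℝ} (h : ∀ i, x i = p ∨ x i = q) :
    ∑ i, x i = Fintype.card ι * p + #{i | x i = q} * (q - p) := by
  have hsplit : ∀ i, x i = p + if x i = q then q - p else 0 := fun i => by
    rcases h i with hp | hq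
    · split_ifs with hq <;> linarith
    · simp [hq]
  rw [sum_congr rfl fun i _ => hsplit i, sum_add_distrib, ← sum_filter, sum_const, sum_const,
    card_univ, nsmul_eq_mul, nsmul_eq_mul]

theorem exists_eq_ite_of_card_filter_eq_one {α : Type*} [DecidableEq ι] [DecidableEq α]
    {x : ι → α} {p q : α} (h : ∀ i, x i = p ∨ x i = q) (hq : #{i | x i = q} = 1) :
    ∃ i, ∀ j, x j = if j = i then q else p := by
  obtain ⟨i, hi⟩ := card_eq_one.1 hq
  have hiff : ∀ j, x j = q ↔ j = i := fun j => by simpa using Finset.ext_iff.1 hi j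
  refine ⟨i, fun j => ?_⟩
  split_ifs with hj
  · exact (hiff j).2 hj
  · exact (h j).resolve_right (mt (hiff j).1 hj)

end TwoValued

theorem norm_v_sq (n : ℕ) (i : Fin (n + 1)) : ‖v n i‖ ^ 2 = n / (n + 1) := by
  rw [EuclideanSpace.real_norm_sq_eq]
  simp [v, apply_ite (· ^ 2), sum_ite, filter_eq', filter_ne']
  field_simp

theorem exists_eq_v_of_forall_eq_or_eq {n : ℕ} {x : EuclideanSpace ℝ (Fin (n + 1))}
    (hsum : ∑ i, x i = 0) (h : ∀ i, x i = n / (n + 1) - 1 ∨ x i = n / (n + 1)) :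
    ∃ i, x = v n i := by
  have hcard := sum_eq_of_forall_eq_or_eq h
  have hlow : (Fintype.card (Fin (n + 1)) : ℝ) * (n / (n + 1) - 1) = -1 := by
    rw [Fintype.card_fin]
    field_simp
    push_cast
    ring
  rw [hsum, hlow, sub_sub_cancel, mul_one] at hcard
  have hone : (#{i | x i = n / (n + 1)} : ℝ) = 1 := by linarith
  obtain ⟨i, hi⟩ := exists_eq_ite_of_card_filter_eq_one h (Nat.cast_eq_one.1 hone)
  refine ⟨i, ?_⟩
  ext j
  rw [hi j, v, WithLp.ofLp_toLp]
  split_ifs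
  · rfl
  · field_simp
    ring

theorem le_mul_mul_one_sub_of_mul_eq_int {n : ℕ} {t : ℝ} {r : ℤ} (hr : (n + 1) * t = r)
    (ht0 : 0 < t) (ht1 : t < 1) :
    n / (n + 1) ≤ (n + 1) * (t * (1 - t)) ∧
    ((n + 1) * (t * (1 - t)) = n / (n + 1) → t = 1 / (n + 1) ∨ t = n / (n + 1)) := by
  have hr1 : (1 : ℝ) ≤ r := by
    have : (0 : ℝ) < r := by rw [← hr]; positivity
    exact_mod_cast (show (0 : ℤ) < r by exact_mod_cast this)
  have hrn : (r : ℝ) ≤ n := by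
    have : (r : ℝ) < n + 1 := by rw [← hr]; nlinarith
    have : r < (n : ℤ) + 1 := by exact_mod_cast this
    exact_mod_cast (show r ≤ n by omega)
  have hgap : (n + 1 : ℝ) * (t * (1 - t)) - n / (n + 1) = (r - 1) * (n - r) / (n + 1) := by
    rw [eq_div_iff (by positivity), ← hr]
    field_simp
    ring
  refine ⟨?_, fun heq => ?_⟩
  · linarith [div_nonneg (mul_nonneg (sub_nonneg.2 hr1) (sub_nonneg.2 hrn)) (by positivity :
      (0 : ℝ) ≤ n + 1)]
  · rw [heq, sub_self, eq_comm, div_eq_zero_iff] at hgap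
    rcases mul_eq_zero.1 (hgap.resolve_right (by positivity)) with h | h
    · exact Or.inl (by rw [eq_div_iff (by positivity)]; linarith)
    · exact Or.inr (by rw [eq_div_iff (by positivity)]; linarith)

theorem le_sum_sq_of_fract_ne_zero {n : ℕ} {x : EuclideanSpace ℝ (Fin (n + 1))} (hx : x ∈ Astar n)
    (ht : Int.fract (x 0) ≠ 0) :
    n / (n + 1) ≤ ∑ i, x i ^ 2 ∧ (∑ i, x i ^ 2 = n / (n + 1) → ∃ i, x = v n i ∨ x = -v n i) := by
  obtain ⟨hsum, hdiff⟩ := hx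
  have hcoset : ∀ i, ∃ m : ℤ, x i - Int.fract (x 0) = m :=
    fun i => exists_int_sub_fract_eq hdiff i 0
  obtain ⟨r, hr⟩ := exists_int_card_mul_fract_eq hsum hdiff 0
  have hbound := card_mul_le_sum_sq hsum hcoset
  simp only [Fintype.card_fin, Nat.cast_add, Nat.cast_one] at hr hbound hcoset
  obtain ⟨hlow, hcases⟩ := le_mul_mul_one_sub_of_mul_eq_int hr
    ((Int.fract_nonneg (x 0)).lt_of_ne' ht) (Int.fract_lt_one (x 0))
  set t := Int.fract (x 0)
  refine ⟨hlow.trans hbound, fun heq => ?_⟩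
  have hvals := eq_or_eq_sub_one_of_sum_sq_eq hsum hcoset (by
    simp only [Fintype.card_fin, Nat.cast_add, Nat.cast_one]
    linarith)
  rcases hcases (by linarith) with htval | htval
  · have hvneg : (n / (n + 1) - 1 : ℝ) = -t ∧ (n / (n + 1) : ℝ) = -(t - 1) := by
      rw [htval]; constructor <;> field_simp <;> ring
    obtain ⟨i, hi⟩ := exists_eq_v_of_forall_eq_or_eq (x := -x) (by simp [hsum]) fun j => by
      rw [hvneg.1, hvneg.2, PiLp.neg_apply, neg_inj, neg_inj]
      exact hvals j
    exact ⟨i, Or.inr (by rw [← hi, neg_neg])⟩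
  · obtain ⟨i, hi⟩ := exists_eq_v_of_forall_eq_or_eq hsum fun j => by
      rw [← htval]
      exact (hvals j).symm
    exact ⟨i, Or.inl hi⟩

theorem shortest_vectors_general (n : ℕ)
    (x : EuclideanSpace ℝ (Fin (n + 1))) (hx : x ∈ Astar n) (hx0 : x ≠ 0) :
    (n : ℝ) / ((n : ℝ) + 1) ≤ ‖x‖ ^ 2 ∧
    (‖x‖ ^ 2 = (n : ℝ) / ((n : ℝ) + 1) ↔ ∃ i, x = v n i ∨ x = -v n i) := by
  suffices h : n / (n + 1) ≤ ‖x‖ ^ 2 ∧ (‖x‖ ^ 2 = n / (n + 1) → ∃ i, x = v n i ∨ x = -v n i) from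
    ⟨h.1, h.2, by rintro ⟨i, rfl | rfl⟩ <;> simp only [norm_neg, norm_v_sq]⟩
  rw [EuclideanSpace.real_norm_sq_eq]
  by_cases ht : Int.fract (x 0) = 0
  · have hint : ∀ i, ∃ m : ℤ, x i = m := fun i => by
      simpa [ht] using exists_int_sub_fract_eq hx.2 i 0
    have htwo := two_le_sum_sq_of_eq_int hx.1 hint ((WithLp.ofLp_injective 2).ne_iff.2 hx0)
    have hlt : (n : ℝ) / (n + 1) < 2 := by rw [div_lt_iff₀ (by positivity)]; linarith
    exact ⟨by linarith, fun h => absurd h (by linarith)⟩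
  · exact le_sum_sq_of_fract_ne_zero hx ht

/-- For `n ≥ 2`, every nonzero `x ∈ A*_n` satisfies `‖x‖² ≥ n/(n+1)`, with
equality iff `x = ±v⁽ⁱ⁾` for some `i`; i.e. the `±v⁽ⁱ⁾` are exactly the shortest
non-zero vectors of `A*_n`. -/
theorem shortest_vectors (n : ℕ) (hn : 2 ≤ n)
    (x : EuclideanSpace ℝ (Fin (n + 1))) (hx : x ∈ Astar n) (hx0 : x ≠ 0) :
    (n : ℝ) / ((n : ℝ) + 1) ≤ ‖x‖ ^ 2 ∧
    (‖x‖ ^ 2 = (n : ℝ) / ((n : ℝ) + 1) ↔ ∃ i, x = v n i ∨ x = -v n i) :=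
  shortest_vectors_general n x hx hx0
end
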